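/- Let (x1,...,x6) with x2, x4, x6 > 0 satisfy the system (E): x1 = 2·x2·x4 − (1/2)·(x2/x4 + x4/x2), x3 = 2·x4·x6 − (1/2)·(x4/x6 + x6/x4), x5 = 2·x2·x6 − (1/2)·(x2/x6 + x6/x2), and suppose 1 ≤ x3 ≤ 2, 1 ≤ x5 ≤ 2 and x1 = 2 (so that the hyper-ideal edge e23 has the maximal length arccosh 2). Then φ(x) ≤ 7√2/12, and moreover arccos(7√2/12) > 2π/11; consequently the dihedral angle arccos(φ(x)) at e23 is greater than 2π/11. -/

import Mathlib

/-!
Clearing denominators, (E) says `x2² + x4² + 2·x1·x2·x4 = (2·x2·x4)²`, so the second square root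
in `φ` equals `2·x2·x4`, while the first is at least `x3 + x5 + 1` because `(x3 - 1)(x5 - 1) ≥ 0`.
Hence `φ ≤ 4/5` reduces to a polynomial bound on the numerator. The equations for `x3` and `x5`
force `x4 / x2 ∈ [1/2, 2]`, hence `x2·x4 ∈ [3/2, 13/8]`, and bound `x6` from below by
`2·x6·(x2 + x4) ≥ 2 + x3 + x5`; after this the numerator is affine in `x3`, `x5` with nonnegative
coefficients, so the worst case is `x3 = x5 = 2`. Finally `4/5 < 7√2/12 < cos (2π/11)`, the last
step from `cos t ≥ 1 - t²/2`.
-/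

/-- The cosine of the dihedral angle at the hyper-ideal edge e23 of a decorated
3-1 type hyperbolic tetrahedron. -/
noncomputable def phi (x1 x2 x3 x4 x5 x6 : ℝ) : ℝ :=
  (x3 * x4 + x2 * x5 + x1 * x2 * x3 + x1 * x4 * x5 + x6 - x1 ^ 2 * x6) /
    (Real.sqrt (x1 ^ 2 + x3 ^ 2 + x5 ^ 2 + 2 * x1 * x3 * x5 - 1) *
      Real.sqrt (x2 ^ 2 + x4 ^ 2 + 2 * x1 * x2 * x4))

open Real

/-- Equation (E) for an edge of cosh-length `x` whose end decorations are `a` and `b`,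
with denominators cleared. -/
def EdgeRelation (x a b : ℝ) : Prop :=
  a ^ 2 + b ^ 2 + 2 * x * a * b = 4 * (a * b) ^ 2

namespace EdgeRelation

variable {a b c x y z : ℝ}

lemma of_eq (ha : 0 < a) (hb : 0 < b) (h : x = 2 * a * b - (1/2) * (a / b + b / a)) :
    EdgeRelation x a b := by
  unfold EdgeRelation
  subst h
  field_simp
  ring

lemma symm (h : EdgeRelation x a b) : EdgeRelation x b a := by
  unfold EdgeRelation at *
  linear_combination h

lemma one_add_le (ha : 0 < a) (hb : 0 < b) (h : EdgeRelation x a b) : 1 + x ≤ 2 * (a * b) := by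
  unfold EdgeRelation at h
  refine le_of_mul_le_mul_left ?_ (by positivity : 0 < 2 * (a * b))
  nlinarith [sq_nonneg (a - b)]

lemma sqrt_eq (ha : 0 < a) (hb : 0 < b) (h : EdgeRelation x a b) :
    √(a ^ 2 + b ^ 2 + 2 * x * a * b) = 2 * (a * b) := by
  rw [h, show 4 * (a * b) ^ 2 = (2 * (a * b)) ^ 2 by ring]
  exact sqrt_sq (by positivity)

lemma le_two_mul_of_le (ha : 0 < a) (hb : 0 < b) (hc : 0 < c)
    (hac : EdgeRelation y a c) (hbc : EdgeRelation z b c)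
    (hy : 1 ≤ y) (hz : z ≤ 2) (hab : a ≤ b) : b ≤ 2 * a := by
  unfold EdgeRelation at hac hbc
  have key : 2 * (a * b * c) * (z * a - y * b) = c ^ 2 * (b ^ 2 - a ^ 2) := by
    linear_combination a ^ 2 * hbc - b ^ 2 * hac
  have hsq : 0 ≤ b ^ 2 - a ^ 2 := by nlinarith
  have hyz : 0 ≤ z * a - y * b :=
    nonneg_of_mul_nonneg_right (key ▸ mul_nonneg (sq_nonneg c) hsq) (by positivity)
  nlinarith

lemma mul_le_thirteen_eighths (h : EdgeRelation 2 a b)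
    (hba : b ≤ 2 * a) (hab : a ≤ 2 * b) : a * b ≤ 13 / 8 := by
  unfold EdgeRelation at h
  nlinarith [mul_nonneg (sub_nonneg.2 hba) (sub_nonneg.2 hab)]

lemma sixteen_fifths_mul_add_three_le (ha : 0 < a) (hb : 0 < b) (h : EdgeRelation 2 a b)
    (hba : b ≤ 2 * a) :
    16 / 5 * (a * b) * (a + b) + 3 ≤ 2 * (a + b) * (a + b + a) := by
  have hw : 3 / 2 ≤ a * b := by linarith [h.one_add_le ha hb]
  unfold EdgeRelation at h
  have hs : a + b ≤ 2 * (a * b) - 1 / 2 := by nlinarith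
  nlinarith

lemma twelve_mul_sq_le (ha : 0 < a) (hb : 0 < b) (h : EdgeRelation 2 a b)
    (hw : a * b ≤ 13 / 8) :
    12 * (a + b) ^ 2 ≤ 18 + 16 * (a * b) * (a + b) := by
  have hw' : 3 / 2 ≤ a * b := by linarith [h.one_add_le ha hb]
  unfold EdgeRelation at h
  nlinarith [mul_nonneg (mul_nonneg (sub_nonneg.2 hw') (sub_nonneg.2 hw)) (add_pos ha hb).le,
    sq_nonneg (a + b - 5 / 2)]

end EdgeRelation

section Tetrahedron

variable {x2 x3 x4 x5 x6 : ℝ}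

lemma phi_numerator_le (h2 : 0 < x2) (h4 : 0 < x4) (h6 : 0 < x6)
    (c1 : EdgeRelation 2 x2 x4) (c3 : EdgeRelation x3 x4 x6) (c5 : EdgeRelation x5 x2 x6)
    (h3 : 1 ≤ x3 ∧ x3 ≤ 2) (h5 : 1 ≤ x5 ∧ x5 ≤ 2) :
    x3 * x4 + x2 * x5 + 2 * x2 * x3 + 2 * x4 * x5 + x6 - 2 ^ 2 * x6 ≤
      8 / 5 * (x3 + x5 + 1) * (x2 * x4) := by
  obtain ⟨h42, h24⟩ : x4 ≤ 2 * x2 ∧ x2 ≤ 2 * x4 := by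
    rcases le_total x2 x4 with h | h
    · exact ⟨c5.le_two_mul_of_le h2 h4 h6 c3 h5.1 h3.2 h, by linarith⟩
    · exact ⟨by linarith, c3.le_two_mul_of_le h4 h2 h6 c5 h3.1 h5.2 h⟩
  have C3 := c1.sixteen_fifths_mul_add_three_le h2 h4 h42
  have C5 := c1.symm.sixteen_fifths_mul_add_three_le h4 h2 h24
  have hsq := c1.twelve_mul_sq_le h2 h4 (c1.mul_le_thirteen_eighths h42 h24)
  have hx6 : 2 + x3 + x5 ≤ 2 * x6 * (x2 + x4) := by
    linarith [c3.one_add_le h4 h6, c5.one_add_le h2 h6]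
  refine le_of_mul_le_mul_left ?_ (by positivity : 0 < 2 * (x2 + x4))
  -- affine in `x3`, `x5` with nonnegative coefficients by `C3`, `C5`; `hsq` is the case `x3 = x5 = 2`
  nlinarith [mul_nonneg (sub_nonneg.2 h3.2) (sub_nonneg.2 C3),
    mul_nonneg (sub_nonneg.2 h5.2) (sub_nonneg.2 C5)]

lemma add_add_one_le_sqrt (h3 : 1 ≤ x3) (h5 : 1 ≤ x5) :
    x3 + x5 + 1 ≤ √(2 ^ 2 + x3 ^ 2 + x5 ^ 2 + 2 * 2 * x3 * x5 - 1) :=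
  le_sqrt_of_sq_le (by nlinarith [mul_nonneg (sub_nonneg.2 h3) (sub_nonneg.2 h5)])

lemma phi_two_le_four_fifths (h2 : 0 < x2) (h4 : 0 < x4) (h6 : 0 < x6)
    (c1 : EdgeRelation 2 x2 x4) (c3 : EdgeRelation x3 x4 x6) (c5 : EdgeRelation x5 x2 x6)
    (h3 : 1 ≤ x3 ∧ x3 ≤ 2) (h5 : 1 ≤ x5 ∧ x5 ≤ 2) :
    phi 2 x2 x3 x4 x5 x6 ≤ 4 / 5 := by
  have hw : 0 < 2 * (x2 * x4) := by positivity
  have hden := mul_le_mul_of_nonneg_right (add_add_one_le_sqrt h3.1 h5.1) hw.le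
  rw [phi, c1.sqrt_eq h2 h4, div_le_iff₀ (by nlinarith)]
  linear_combination phi_numerator_le h2 h4 h6 c1 c3 c5 h3 h5 + 4 / 5 * hden

end Tetrahedron

lemma four_fifths_le : (4 / 5 : ℝ) ≤ 7 * √2 / 12 := by
  have : (48 / 35 : ℝ) ^ 2 ≤ 2 := by norm_num
  linarith [le_sqrt_of_sq_le this]

lemma lt_cos_two_pi_div_eleven : 7 * √2 / 12 < cos (2 * π / 11) := by
  have hsqrt : √2 < 99 / 70 := (sqrt_lt' (by norm_num)).2 (by norm_num)
  have hpi : π ^ 2 < 10 := by nlinarith [pi_lt_d2, pi_pos]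
  linarith [one_sub_sq_div_two_le_cos (x := 2 * π / 11)]

lemma two_pi_div_eleven_lt_arccos : 2 * π / 11 < arccos (7 * √2 / 12) := by
  have h := arccos_lt_arccos (by linarith [sqrt_nonneg 2]) lt_cos_two_pi_div_eleven (cos_le_one _)
  rwa [arccos_cos (by positivity) (by linarith [pi_pos])] at h

theorem stmt_13 (x1 x2 x3 x4 x5 x6 : ℝ)
    (h2 : 0 < x2) (h4 : 0 < x4) (h6 : 0 < x6)
    (e1 : x1 = 2 * x2 * x4 - (1/2) * (x2 / x4 + x4 / x2))
    (e3 : x3 = 2 * x4 * x6 - (1/2) * (x4 / x6 + x6 / x4))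
    (e5 : x5 = 2 * x2 * x6 - (1/2) * (x2 / x6 + x6 / x2))
    (h3 : 1 ≤ x3 ∧ x3 ≤ 2) (h5 : 1 ≤ x5 ∧ x5 ≤ 2) (h1 : x1 = 2) :
    phi x1 x2 x3 x4 x5 x6 ≤ 7 * Real.sqrt 2 / 12 ∧
    Real.arccos (7 * Real.sqrt 2 / 12) > 2 * Real.pi / 11 ∧
    Real.arccos (phi x1 x2 x3 x4 x5 x6) > 2 * Real.pi / 11 := by
  have c1 := EdgeRelation.of_eq h2 h4 e1
  have c3 := EdgeRelation.of_eq h4 h6 e3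
  have c5 := EdgeRelation.of_eq h2 h6 e5
  subst h1
  have hphi : phi 2 x2 x3 x4 x5 x6 ≤ 7 * √2 / 12 :=
    (phi_two_le_four_fifths h2 h4 h6 c1 c3 c5 h3 h5).trans four_fifths_le
  exact ⟨hphi, two_pi_div_eleven_lt_arccos,
    two_pi_div_eleven_lt_arccos.trans_le (arccos_le_arccos hphi)⟩
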